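/- Let m and n be integers with n ≥ 2 and m − n ≥ 3. Then for every q with 2 ≤ q ≤ n and every i with 1 ≤ i ≤ m−1, the graph distance in the generalized Möbius ladder M_{m,n} satisfies d(v_{m−1,1}, v_{i,q}) = d(v_{1,1}, v_{i,n+2−q}). -/
import Mathlib


/-- The relation generating the edges of the generalized Möbius ladder `M_{m,n}`:
horizontal edges `{(i,j),(i+1,j)}`, vertical edges `{(i,j),(i,j+1)}`, and the
twisted edges `{(m-1,j),(1,n+1-j)}`. -/
def gmlRel (m n : ℕ) (u v : ℕ × ℕ) : Prop :=
  (u.2 = v.2 ∧ v.1 = u.1 + 1) ∨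
  (u.1 = v.1 ∧ v.2 = u.2 + 1) ∨
  (u.1 = m - 1 ∧ v.1 = 1 ∧ u.2 + v.2 = n + 1)

/-- The vertex set `{(i,j) : 1 ≤ i ≤ m-1, 1 ≤ j ≤ n}` of `M_{m,n}`. -/
abbrev GMLVert (m n : ℕ) : Type :=
  {p : ℕ × ℕ // 1 ≤ p.1 ∧ p.1 ≤ m - 1 ∧ 1 ≤ p.2 ∧ p.2 ≤ n}

/-- The generalized Möbius ladder `M_{m,n}` as a simple graph. -/
def GML (m n : ℕ) : SimpleGraph (GMLVert m n) :=
  SimpleGraph.fromRel (fun u v => gmlRel m n u.val v.val)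

/-- `W` is a resolving set of `M_{m,n}`: distinct vertices have distinct
tuples of distances to the elements of `W`. -/
def IsResolving (m n : ℕ) (W : Set (GMLVert m n)) : Prop :=
  ∀ u v : GMLVert m n,
    (∀ w ∈ W, (GML m n).dist u w = (GML m n).dist v w) → u = v

/-- The metric dimension of `M_{m,n}`: the minimum cardinality of a resolving set. -/
noncomputable def metricDim (m n : ℕ) : ℕ :=
  sInf {k : ℕ | ∃ W : Finset (GMLVert m n), W.card = k ∧ IsResolving m n ↑W}

namespace GMLaux

variable {m n : ℕ}

lemma adj_iff {u v : GMLVert m n} :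
    (GML m n).Adj u v ↔ u ≠ v ∧ (gmlRel m n u.val v.val ∨ gmlRel m n v.val u.val) :=
  Iff.rfl

lemma adj_of_rel {u v : GMLVert m n} (hne : u.val ≠ v.val)
    (h : gmlRel m n u.val v.val ∨ gmlRel m n v.val u.val) : (GML m n).Adj u v :=
  ⟨fun h' => hne (congrArg Subtype.val h'), h⟩

/-- `Rch u v k` : there is a walk from `u` to `v` of length at most `k`. -/
def Rch (u v : GMLVert m n) (k : ℕ) : Prop :=
  ∃ p : (GML m n).Walk u v, p.length ≤ k

lemma rch_refl (u : GMLVert m n) : Rch u u 0 := ⟨SimpleGraph.Walk.nil, le_refl _⟩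

lemma rch_of_adj {u v : GMLVert m n} (h : (GML m n).Adj u v) : Rch u v 1 :=
  ⟨h.toWalk, by simp⟩

lemma rch_trans {u v w : GMLVert m n} {a b : ℕ} (h1 : Rch u v a) (h2 : Rch v w b) :
    Rch u w (a + b) := by
  obtain ⟨p, hp⟩ := h1
  obtain ⟨q, hq⟩ := h2
  exact ⟨p.append q, by rw [SimpleGraph.Walk.length_append]; omega⟩

lemma rch_symm {u v : GMLVert m n} {a : ℕ} (h : Rch u v a) : Rch v u a := by
  obtain ⟨p, hp⟩ := h
  exact ⟨p.reverse, by rw [SimpleGraph.Walk.length_reverse]; exact hp⟩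

lemma rch_mono {u v : GMLVert m n} {a b : ℕ} (h : Rch u v a) (hab : a ≤ b) : Rch v u b := by
  obtain ⟨p, hp⟩ := h
  exact ⟨p.reverse, by rw [SimpleGraph.Walk.length_reverse]; omega⟩

lemma rch_horiz : ∀ (k : ℕ) (u v : GMLVert m n),
    u.val.2 = v.val.2 → v.val.1 = u.val.1 + k → Rch u v k := by
  intro k
  induction k with
  | zero =>
    intro u v h1 h2
    have : u = v := Subtype.ext (Prod.ext (by omega) h1)
    subst this; exact rch_refl u
  | succ k ih =>
    intro u v h1 h2
    have hu := u.property
    have hv := v.property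
    set w : GMLVert m n := ⟨(u.val.1 + k, u.val.2), by
      constructor
      · omega
      refine ⟨by omega, hu.2.2⟩⟩ with hw
    have h3 : Rch u w k := ih u w rfl rfl
    have h4 : (GML m n).Adj w v := by
      apply adj_of_rel
      · intro hEq
        have := congrArg Prod.fst hEq
        simp only [hw] at this
        omega
      · left
        left
        exact ⟨h1, h2⟩
    have := rch_trans h3 (rch_of_adj h4)
    exact this

lemma rch_vert : ∀ (k : ℕ) (u v : GMLVert m n),
    u.val.1 = v.val.1 → v.val.2 = u.val.2 + k → Rch u v k := by
  intro k
  induction k with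
  | zero =>
    intro u v h1 h2
    have : u = v := Subtype.ext (Prod.ext h1 (by omega))
    subst this; exact rch_refl u
  | succ k ih =>
    intro u v h1 h2
    have hu := u.property
    have hv := v.property
    set w : GMLVert m n := ⟨(u.val.1, u.val.2 + k), by
      refine ⟨hu.1, hu.2.1, by omega, by omega⟩⟩ with hw
    have h3 : Rch u w k := ih u w rfl rfl
    have h4 : (GML m n).Adj w v := by
      apply adj_of_rel
      · intro hEq
        have := congrArg Prod.snd hEq
        simp only [hw] at this
        omega
      · left
        right
        left
        exact ⟨h1, h2⟩
    exact rch_trans h3 (rch_of_adj h4)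

lemma dist_le_of_rch {u v : GMLVert m n} {k : ℕ} (h : Rch u v k) : (GML m n).dist u v ≤ k := by
  obtain ⟨p, hp⟩ := h
  exact (SimpleGraph.dist_le p).trans hp

lemma reachable_of_rch {u v : GMLVert m n} {k : ℕ} (h : Rch u v k) :
    (GML m n).Reachable u v := by
  obtain ⟨p, _⟩ := h
  exact ⟨p⟩

lemma walk_lower (f : GMLVert m n → ℕ)
    (hf : ∀ u v : GMLVert m n, (GML m n).Adj u v → f v ≤ f u + 1) :
    ∀ {u v : GMLVert m n} (p : (GML m n).Walk u v), f v ≤ f u + p.length := by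
  intro u v p
  induction p with
  | nil => simp
  | cons h p ih =>
    have := hf _ _ h
    simp only [SimpleGraph.Walk.length_cons]
    omega

/-- Walk-induction lower bound: any 1-Lipschitz function bounds the distance. -/
lemma lower_bound (f : GMLVert m n → ℕ)
    (hf : ∀ u v : GMLVert m n, (GML m n).Adj u v → f v ≤ f u + 1)
    {u v : GMLVert m n} (hr : (GML m n).Reachable u v) :
    f v ≤ f u + (GML m n).dist u v := by
  obtain ⟨p, hp⟩ := hr.exists_walk_length_eq_dist
  rw [← hp]
  exact walk_lower f hf p

end GMLaux

open GMLaux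

theorem stmt7 (m n : ℕ) (hn : 2 ≤ n) (hm : n + 3 ≤ m)
    (q i : ℕ) (hq1 : 2 ≤ q) (hq2 : q ≤ n) (hi1 : 1 ≤ i) (hi2 : i ≤ m - 1) :
    (GML m n).dist ⟨(m - 1, 1), by omega⟩ ⟨(i, q), by omega⟩ =
      (GML m n).dist ⟨(1, 1), by omega⟩ ⟨(i, n + 2 - q), by omega⟩ := by
  -- notation for the four vertices
  set s₁ : GMLVert m n := ⟨(m - 1, 1), by omega⟩ with hs₁
  set t₁ : GMLVert m n := ⟨(i, q), by omega⟩ with ht₁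
  set s₂ : GMLVert m n := ⟨(1, 1), by omega⟩ with hs₂
  set t₂ : GMLVert m n := ⟨(i, n + 2 - q), by omega⟩ with ht₂
  -- the distance functions from s₁ and s₂ respectively
  set f₁ : GMLVert m n → ℕ := fun v => min (m - v.val.1 + v.val.2 - 2) (v.val.1 + n - v.val.2)
    with hf₁
  set f₂ : GMLVert m n → ℕ := fun v => min (v.val.1 + v.val.2 - 2) (m + n - v.val.1 - v.val.2)
    with hf₂
  -- Lipschitz property of f₁
  have hlip₁ : ∀ u v : GMLVert m n, (GML m n).Adj u v → f₁ v ≤ f₁ u + 1 := by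
    rintro ⟨⟨a, b⟩, hu⟩ ⟨⟨c, d⟩, hv⟩ ⟨hne, hrel⟩
    simp only [hf₁]
    rcases hrel with h | h <;>
      rcases h with ⟨h1, h2⟩ | ⟨h1, h2⟩ | ⟨h1, h2, h3⟩ <;>
      simp only [Nat.min_def] at * <;> split_ifs <;> omega
  -- Lipschitz property of f₂
  have hlip₂ : ∀ u v : GMLVert m n, (GML m n).Adj u v → f₂ v ≤ f₂ u + 1 := by
    rintro ⟨⟨a, b⟩, hu⟩ ⟨⟨c, d⟩, hv⟩ ⟨hne, hrel⟩
    simp only [hf₂]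
    rcases hrel with h | h <;>
      rcases h with ⟨h1, h2⟩ | ⟨h1, h2⟩ | ⟨h1, h2, h3⟩ <;>
      simp only [Nat.min_def] at * <;> split_ifs <;> omega
  -- Upper bound 1a : s₁ → (i,1) → (i,q), length (m-1-i) + (q-1)
  have hub1a : (GML m n).dist s₁ t₁ ≤ m + q - i - 2 := by
    have h1 : Rch (⟨(i, 1), by omega⟩ : GMLVert m n) s₁ (m - 1 - i) :=
      rch_horiz _ _ _ rfl (by simp [hs₁]; omega)
    have h2 : Rch (⟨(i, 1), by omega⟩ : GMLVert m n) t₁ (q - 1) :=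
      rch_vert _ _ _ rfl (by simp [ht₁]; omega)
    have := rch_trans (rch_symm h1) h2
    exact (dist_le_of_rch this).trans (by omega)
  -- Upper bound 1b : s₁ → (1,n) → (i,n) → (i,q), length 1 + (i-1) + (n-q)
  have hub1b : (GML m n).dist s₁ t₁ ≤ i + n - q := by
    have hadj : (GML m n).Adj s₁ (⟨(1, n), by omega⟩ : GMLVert m n) := by
      apply adj_of_rel
      · intro hEq; have := congrArg Prod.fst hEq; simp [hs₁] at this; omega
      · left; right; right; simp [hs₁]; omega
    have h1 : Rch (⟨(1, n), by omega⟩ : GMLVert m n) (⟨(i, n), by omega⟩ : GMLVert m n)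
        (i - 1) := rch_horiz _ _ _ rfl (by simp; omega)
    have h2 : Rch t₁ (⟨(i, n), by omega⟩ : GMLVert m n) (n - q) :=
      rch_vert _ _ _ (by simp [ht₁]) (by simp [ht₁]; omega)
    have := rch_trans (rch_trans (rch_of_adj hadj) h1) (rch_symm h2)
    exact (dist_le_of_rch this).trans (by omega)
  -- Upper bound 2a : s₂ → (i,1) → (i, n+2-q), length (i-1) + (n+1-q)
  have hub2a : (GML m n).dist s₂ t₂ ≤ i + n - q := by
    have h1 : Rch s₂ (⟨(i, 1), by omega⟩ : GMLVert m n) (i - 1) :=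
      rch_horiz _ _ _ rfl (by simp [hs₂]; omega)
    have h2 : Rch (⟨(i, 1), by omega⟩ : GMLVert m n) t₂ (n + 1 - q) :=
      rch_vert _ _ _ (by simp [ht₂]) (by simp [ht₂]; omega)
    have := rch_trans h1 h2
    exact (dist_le_of_rch this).trans (by omega)
  -- Upper bound 2b : s₂ → (1,q-1) → (m-1, n+2-q) → (i, n+2-q), length (q-2)+1+(m-1-i)
  have hub2b : (GML m n).dist s₂ t₂ ≤ m + q - i - 2 := by
    have h1 : Rch s₂ (⟨(1, q - 1), by omega⟩ : GMLVert m n) (q - 2) :=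
      rch_vert _ _ _ rfl (by simp [hs₂]; omega)
    have hadj : (GML m n).Adj (⟨(1, q - 1), by omega⟩ : GMLVert m n)
        (⟨(m - 1, n + 2 - q), by omega⟩ : GMLVert m n) := by
      apply adj_of_rel
      · intro hEq; have := congrArg Prod.fst hEq; simp at this; omega
      · right; right; right; simp; omega
    have h2 : Rch t₂ (⟨(m - 1, n + 2 - q), by omega⟩ : GMLVert m n) (m - 1 - i) :=
      rch_horiz _ _ _ (by simp [ht₂]) (by simp [ht₂]; omega)
    have := rch_trans (rch_trans h1 (rch_of_adj hadj)) (rch_symm h2)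
    exact (dist_le_of_rch this).trans (by omega)
  -- Lower bounds
  have hr₁ : (GML m n).Reachable s₁ t₁ := by
    have h1 : Rch (⟨(i, 1), by omega⟩ : GMLVert m n) s₁ (m - 1 - i) :=
      rch_horiz _ _ _ rfl (by simp [hs₁]; omega)
    have h2 : Rch (⟨(i, 1), by omega⟩ : GMLVert m n) t₁ (q - 1) :=
      rch_vert _ _ _ rfl (by simp [ht₁]; omega)
    exact reachable_of_rch (rch_trans (rch_symm h1) h2)
  have hr₂ : (GML m n).Reachable s₂ t₂ := by
    have h1 : Rch s₂ (⟨(i, 1), by omega⟩ : GMLVert m n) (i - 1) :=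
      rch_horiz _ _ _ rfl (by simp [hs₂]; omega)
    have h2 : Rch (⟨(i, 1), by omega⟩ : GMLVert m n) t₂ (n + 1 - q) :=
      rch_vert _ _ _ (by simp [ht₂]) (by simp [ht₂]; omega)
    exact reachable_of_rch (rch_trans h1 h2)
  have hlb₁ : f₁ t₁ ≤ f₁ s₁ + (GML m n).dist s₁ t₁ := lower_bound f₁ hlip₁ hr₁
  have hlb₂ : f₂ t₂ ≤ f₂ s₂ + (GML m n).dist s₂ t₂ := lower_bound f₂ hlip₂ hr₂
  -- evaluate f at the sources and targets
  have hfs₁ : f₁ s₁ = 0 := by simp only [hf₁, hs₁, Nat.min_def]; split_ifs <;> omega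
  have hfs₂ : f₂ s₂ = 0 := by simp only [hf₂, hs₂, Nat.min_def]; split_ifs <;> omega
  have hft₁ : f₁ t₁ = min (m + q - i - 2) (i + n - q) := by
    simp only [hf₁, ht₁, Nat.min_def]; split_ifs <;> omega
  have hft₂ : f₂ t₂ = min (m + q - i - 2) (i + n - q) := by
    simp only [hf₂, ht₂, Nat.min_def]; split_ifs <;> omega
  rw [hfs₁, hft₁] at hlb₁
  rw [hfs₂, hft₂] at hlb₂
  have e₁ : (GML m n).dist s₁ t₁ = min (m + q - i - 2) (i + n - q) := by
    rcases Nat.le_total (m + q - i - 2) (i + n - q) with h | h <;>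
      simp only [Nat.min_def] at * <;> split_ifs at * <;> omega
  have e₂ : (GML m n).dist s₂ t₂ = min (m + q - i - 2) (i + n - q) := by
    rcases Nat.le_total (m + q - i - 2) (i + n - q) with h | h <;>
      simp only [Nat.min_def] at * <;> split_ifs at * <;> omega
  rw [e₁, e₂]
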